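/- For a commutative ring R, the polynomial ring R[X] is an n-OAF ring if and only if R is isomorphic to a finite direct product of fields. -/

import Mathlib

/-- A proper ideal `I` is an `n`-OA ideal (`n`-`1`-absorbing prime) if whenever a product of
`n+1` nonunits lies in `I`, then the product of the first `n` of them lies in `I` or the last
one lies in `I`. -/
def IsNOAIdeal {R : Type*} [CommRing R] (n : ℕ) (I : Ideal R) : Prop :=
  I ≠ ⊤ ∧ ∀ a : Fin (n + 1) → R, (∀ i, ¬IsUnit (a i)) → (∏ i, a i) ∈ I →
    (∏ i : Fin n, a i.castSucc) ∈ I ∨ a (Fin.last n) ∈ I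

/-- An ideal has an `n`-OA-factorization if it is a product of finitely many `n`-OA ideals. -/
def HasNOAFactorization {R : Type*} [CommRing R] (n : ℕ) (I : Ideal R) : Prop :=
  ∃ (m : ℕ) (J : Fin m → Ideal R), 0 < m ∧ (∀ i, IsNOAIdeal n (J i)) ∧ I = ∏ i, J i

/-- A ring is an `n`-OAF ring if every proper ideal has an `n`-OA-factorization. -/
def IsNOAFRing (R : Type*) [CommRing R] (n : ℕ) : Prop :=
  ∀ I : Ideal R, I ≠ ⊤ → HasNOAFactorization n I

/-- A general ZPI-ring: every proper ideal is a finite product of prime ideals. -/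
def IsGeneralZPIRing (R : Type*) [CommRing R] : Prop :=
  ∀ I : Ideal R, I ≠ ⊤ →
    ∃ (m : ℕ) (J : Fin m → Ideal R), 0 < m ∧ (∀ i, (J i).IsPrime) ∧ I = ∏ i, J i

/-!
Because `X` and `1 - X` are nonunits with sum `1`, for `n ≥ 1` every `n`-OA ideal of `R[X]` is
prime, so `R[X]` is `n`-OAF exactly when every proper ideal of `R[X]` is a product of primes.

If `X ∈ P₁ ⋯ Pₘ`, comparing coefficients of `X` shows that the contractions `Pᵢ ∩ R` are pairwise
comaximal, so a constant lying in every `Pᵢ` lies in the product. Applied to `J[X] + (X)` this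
makes every ideal `J` of `R` radical, hence every prime of `R` maximal; applied to a prime
factorization of `(X)` it yields finitely many pairwise comaximal maximal ideals of `R` with zero
intersection, and the Chinese remainder theorem finishes. Conversely `(∏ Fᵢ)[X] ≃ ∏ Fᵢ[X]` is a
finite product of principal ideal domains, whose principal ideals factor coordinatewise into primes.
-/

open Polynomial

universe u

section NOAIdeal

variable {S : Type*} [CommRing S]

theorem Ideal.IsPrime.isNOAIdeal {I : Ideal S} (hI : I.IsPrime) (n : ℕ) : IsNOAIdeal n I :=
  ⟨hI.ne_top, fun a _ ha => hI.mem_or_mem (by rwa [Fin.prod_univ_castSucc] at ha)⟩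

theorem not_isUnit_snoc {n : ℕ} {b : Fin n → S} {y : S} (hb : ∀ i, ¬IsUnit (b i))
    (hy : ¬IsUnit y) (i : Fin (n + 1)) : ¬IsUnit (Fin.snoc (α := fun _ => S) b y i) :=
  Fin.lastCases (by simpa) (by simpa) i

theorem IsNOAIdeal.mem_or_mem {n : ℕ} {I : Ideal S} (hI : IsNOAIdeal n I) {b : Fin n → S}
    {y : S} (hb : ∀ i, ¬IsUnit (b i)) (hy : ¬IsUnit y) (h : (∏ i, b i) * y ∈ I) :
    (∏ i, b i) ∈ I ∨ y ∈ I := by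
  simpa using hI.2 _ (not_isUnit_snoc hb hy) (by simpa [Fin.prod_univ_castSucc] using h)

/-- Since `c = c * u + c * v`, membership for all products of `k + 1` nonunits gives it for `k`. -/
theorem Ideal.mem_of_forall_mul_prod_mem {I : Ideal S} {u v : S} (hu : ¬IsUnit u)
    (hv : ¬IsUnit v) (huv : u + v = 1) {x : S} :
    ∀ k, (∀ c : Fin k → S, (∀ i, ¬IsUnit (c i)) → x * ∏ i, c i ∈ I) → x ∈ I
  | 0, h => by simpa using h Fin.elim0 (fun i => i.elim0)
  | k + 1, h => Ideal.mem_of_forall_mul_prod_mem hu hv huv k fun c hc => by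
    have hsnoc : ∀ w, ¬IsUnit w → x * ((∏ i, c i) * w) ∈ I := fun w hw => by
      simpa [Fin.prod_univ_castSucc] using h _ (not_isUnit_snoc hc hw)
    simpa [← mul_add, huv] using I.add_mem (hsnoc u hu) (hsnoc v hv)

theorem IsNOAIdeal.isPrime {n : ℕ} (hn : 0 < n) {I : Ideal S} (hI : IsNOAIdeal n I)
    {u v : S} (hu : ¬IsUnit u) (hv : ¬IsUnit v) (huv : u + v = 1) : I.IsPrime := by
  obtain ⟨k, rfl⟩ := Nat.exists_eq_succ_of_ne_zero hn.ne'
  refine ⟨hI.1, fun {x y} hxy => or_iff_not_imp_right.mpr fun hyI => ?_⟩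
  by_cases hx : IsUnit x
  · exact absurd ((I.unit_mul_mem_iff_mem hx).mp hxy) hyI
  by_cases hy : IsUnit y
  · exact (I.mul_unit_mem_iff_mem hy).mp hxy
  refine I.mem_of_forall_mul_prod_mem hu hv huv k fun c hc => ?_
  have hcons : ∀ i, ¬IsUnit (Fin.cons (α := fun _ => S) x c i) := Fin.cases (by simpa) (by simpa)
  have hprod : (∏ i, Fin.cons (α := fun _ => S) x c i) * y ∈ I := by
    simpa [Fin.prod_univ_succ, mul_right_comm] using I.mul_mem_right (∏ i, c i) hxy
  simpa [Fin.prod_univ_succ, hyI] using hI.mem_or_mem hcons hy hprod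

theorem IsGeneralZPIRing.isNOAFRing (h : IsGeneralZPIRing S) (n : ℕ) : IsNOAFRing S n := fun I hI =>
  let ⟨m, J, hm, hJ, hIJ⟩ := h I hI
  ⟨m, J, hm, fun i => (hJ i).isNOAIdeal n, hIJ⟩

theorem IsNOAFRing.isGeneralZPIRing {n : ℕ} (h : IsNOAFRing S n) (hn : 0 < n) {u v : S}
    (hu : ¬IsUnit u) (hv : ¬IsUnit v) (huv : u + v = 1) : IsGeneralZPIRing S := fun I hI =>
  let ⟨m, J, hm, hJ, hIJ⟩ := h I hI
  ⟨m, J, hm, fun i => (hJ i).isPrime hn hu hv huv, hIJ⟩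

end NOAIdeal

namespace Polynomial

variable {R : Type*} [CommRing R]

theorem C_coeff_zero_mem {P : Ideal R[X]} (hX : X ∈ P) {f : R[X]} (hf : f ∈ P) :
    C (f.coeff 0) ∈ P := by
  rw [← sub_eq_of_eq_add' (X_mul_divX_add f).symm]
  exact P.sub_mem hf (P.mul_mem_right _ hX)

theorem coeff_one_mem_sup_of_mem_mul {P Q : Ideal R[X]} (hP : X ∈ P) (hQ : X ∈ Q) {f : R[X]}
    (hf : f ∈ P * Q) : f.coeff 1 ∈ P.comap C ⊔ Q.comap C := by
  refine Submodule.mul_induction_on hf (fun p hp q hq => ?_) fun f g hf hg => by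
    simpa using Ideal.add_mem _ hf hg
  have hcoeff : (p * q).coeff 1 = p.coeff 0 * q.coeff 1 + p.coeff 1 * q.coeff 0 := by
    simp [coeff_mul, Finset.Nat.antidiagonal_succ]
  rw [hcoeff]
  exact Ideal.add_mem _ (Ideal.mem_sup_left (Ideal.mul_mem_right _ _ (C_coeff_zero_mem hP hp)))
    (Ideal.mem_sup_right (Ideal.mul_mem_left _ _ (C_coeff_zero_mem hQ hq)))

theorem isCoprime_comap_C_of_X_mem_mul {P Q : Ideal R[X]} (h : X ∈ P * Q) :
    IsCoprime (P.comap C) (Q.comap C) := by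
  rw [Ideal.isCoprime_iff_sup_eq, Ideal.eq_top_iff_one]
  simpa using coeff_one_mem_sup_of_mem_mul (Ideal.mul_le_left h) (Ideal.mul_le_right h) h

theorem pairwise_isCoprime_comap_C_of_X_mem_prod {ι : Type*} {s : Finset ι}
    {P : ι → Ideal R[X]} (hX : X ∈ ∏ i ∈ s, P i) :
    (s : Set ι).Pairwise (Function.onFun IsCoprime fun i => (P i).comap C) := by
  classical
  intro i hi j hj hij
  rw [← Finset.mul_prod_erase _ _ hi,
    ← Finset.mul_prod_erase _ _ (Finset.mem_erase.2 ⟨hij.symm, hj⟩), ← mul_assoc] at hX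
  exact isCoprime_comap_C_of_X_mem_mul (Ideal.mul_le_left hX)

theorem C_mem_prod_of_X_mem_prod {ι : Type*} {s : Finset ι} {P : ι → Ideal R[X]}
    (hX : X ∈ ∏ i ∈ s, P i) {a : R} (ha : ∀ i ∈ s, C a ∈ P i) : C a ∈ ∏ i ∈ s, P i := by
  have hmem : a ∈ ∏ i ∈ s, (P i).comap C := by
    rw [Ideal.prod_eq_iInf_of_pairwise_isCoprime (pairwise_isCoprime_comap_C_of_X_mem_prod hX)]
    exact Ideal.mem_iInf.mpr fun i => Ideal.mem_iInf.mpr fun hi => ha i hi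
  have hmap := Ideal.mem_map_of_mem C hmem
  rw [show Ideal.map C _ = Ideal.mapHom C _ from rfl, map_prod] at hmap
  exact Finset.prod_le_prod' (fun i _ => Ideal.map_comap_le) hmap

theorem not_isUnit_one_sub_X [Nontrivial R] : ¬IsUnit (1 - X : R[X]) := by
  rw [← IsUnit.neg_iff, neg_sub, ← C_1]
  exact not_isUnit_X_sub_C 1

end Polynomial

namespace IsGeneralZPIRing

variable {R : Type u} [CommRing R]

theorem C_mem_of_C_mem_radical (h : IsGeneralZPIRing R[X]) {I : Ideal R[X]} (hX : X ∈ I)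
    {a : R} (ha : C a ∈ I.radical) : C a ∈ I := by
  by_cases hI : I = ⊤
  · simp [hI]
  obtain ⟨m, P, -, hP, rfl⟩ := h I hI
  refine C_mem_prod_of_X_mem_prod hX fun i _ => (hP i).radical_le_iff.mpr ?_ ha
  exact Ideal.prod_le_inf.trans (Finset.inf_le (Finset.mem_univ i))

theorem isRadical_of_polynomial (h : IsGeneralZPIRing R[X]) (J : Ideal R) : J.IsRadical := by
  intro a ha
  have hX : X ∈ J.comap constantCoeff := by simp
  simpa using h.C_mem_of_C_mem_radical hX (by rwa [← Ideal.comap_radical, Ideal.mem_comap,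
    constantCoeff_apply, coeff_C_zero])

theorem isMaximal_of_polynomial (h : IsGeneralZPIRing R[X]) {p : Ideal R} (hp : p.IsPrime) :
    p.IsMaximal := by
  refine Ideal.isMaximal_iff.mpr ⟨(Ideal.ne_top_iff_one p).mp hp.ne_top, fun J x hpJ hx hxJ => ?_⟩
  obtain ⟨r, hr⟩ := Ideal.mem_span_singleton'.mp
    (h.isRadical_of_polynomial _ ⟨2, Ideal.mem_span_singleton_self (x ^ 2)⟩)
  have hrx : 1 - r * x ∈ p := by
    have hzero : x * (1 - r * x) = 0 := by linear_combination -hr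
    exact (hp.mem_or_mem (hzero ▸ p.zero_mem)).resolve_left hx
  simpa using J.add_mem (hpJ hrx) (J.mul_mem_left r hxJ)

theorem exists_ringEquiv_pi_field [Nontrivial R] (h : IsGeneralZPIRing R[X]) :
    ∃ (m : ℕ) (F : Fin m → Type u) (_ : ∀ i, Field (F i)),
      Nonempty (R ≃+* ((i : Fin m) → F i)) := by
  obtain ⟨m, P, -, hP, hXP⟩ := h (Ideal.span {X}) <| by
    rw [Ne, Ideal.span_singleton_eq_top]; exact not_isUnit_X
  have hX : X ∈ ∏ i, P i := hXP ▸ Ideal.mem_span_singleton_self X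
  set p : Fin m → Ideal R := fun i => (P i).comap C
  have hcop : Pairwise (Function.onFun IsCoprime p) := by
    simpa [Set.pairwise_univ] using pairwise_isCoprime_comap_C_of_X_mem_prod hX
  have hinf : ⨅ i, p i = ⊥ := by
    refine eq_bot_iff.mpr fun a ha => ?_
    have hCa := C_mem_prod_of_X_mem_prod hX fun i _ => Ideal.mem_iInf.mp ha i
    rwa [← hXP, Ideal.mem_span_singleton, X_dvd_iff, coeff_C_zero] at hCa
  have hmax : ∀ i, (p i).IsMaximal := fun i =>
    h.isMaximal_of_polynomial (Ideal.comap_isPrime C (P i))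
  exact ⟨m, fun i => R ⧸ p i, fun i => Ideal.Quotient.field _,
    ⟨(RingEquiv.quotientBot R).symm.trans ((Ideal.quotEquivOfEq hinf.symm).trans
      (Ideal.quotientInfRingEquivPiQuotient p hcop))⟩⟩

end IsGeneralZPIRing

section PrimeProducts

variable {S T : Type*} [CommRing S] [CommRing T]

theorem isGeneralZPIRing_of_forall_mem_closure
    (h : ∀ I : Ideal S, I ∈ Submonoid.closure {P : Ideal S | P.IsPrime}) :
    IsGeneralZPIRing S := by
  intro I hI
  obtain ⟨l, hl, rfl⟩ := Submonoid.exists_list_of_mem_closure (h I)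
  refine ⟨l.length, l.get, List.length_pos_iff.mpr ?_, fun i => hl _ (List.get_mem l i), by simp⟩
  rintro rfl
  exact hI (by simp [Ideal.one_eq_top])

theorem Ideal.map_mem_closure_isPrime (e : S ≃+* T) {I : Ideal S}
    (hI : I ∈ Submonoid.closure {P : Ideal S | P.IsPrime}) :
    I.map e ∈ Submonoid.closure {P : Ideal T | P.IsPrime} := by
  refine (Submonoid.closure_le (S := (Submonoid.closure _).comap (Ideal.mapHom e))).mpr ?_ hI
  intro P hP
  have : P.IsPrime := hP
  exact Submonoid.subset_closure (Ideal.map_isPrime_of_equiv e)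

theorem Ideal.span_singleton_mulSingle {ι : Type*} [DecidableEq ι] {D : ι → Type*}
    [∀ i, CommRing (D i)] (i : ι) (a : D i) :
    Ideal.span {Pi.mulSingle i a} = (Ideal.span {a}).comap (Pi.evalRingHom D i) := by
  ext x
  simp only [Ideal.mem_span_singleton', Ideal.mem_comap, Pi.evalRingHom_apply]
  constructor
  · rintro ⟨y, rfl⟩
    exact ⟨y i, by simp⟩
  · rintro ⟨b, hb⟩
    refine ⟨Function.update x i b, funext fun j => ?_⟩
    by_cases hj : j = i
    · subst hj
      simp [hb]
    · simp [hj]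

theorem mem_closure_isPrime_pi {ι : Type*} [Finite ι] {D : ι → Type*} [∀ i, CommRing (D i)]
    [∀ i, IsDomain (D i)] [∀ i, IsPrincipalIdealRing (D i)] (K : Ideal (Π i, D i)) :
    K ∈ Submonoid.closure {P | P.IsPrime} := by
  classical
  have := Fintype.ofFinite ι
  obtain ⟨f, rfl⟩ : ∃ f, K = Ideal.span {f} := (IsPrincipalIdealRing.principal K).principal
  rw [← Finset.univ_prod_mulSingle f, ← Ideal.prod_span_singleton]
  refine Submonoid.prod_mem _ fun i _ => ?_
  by_cases hf : f i = 0
  · rw [hf, Ideal.span_singleton_mulSingle, Ideal.span_singleton_eq_bot.mpr rfl]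
    exact Submonoid.subset_closure (Ideal.comap_isPrime _ _)
  obtain ⟨s, hs, hsf⟩ := UniqueFactorizationMonoid.exists_prime_factors (f i) hf
  obtain ⟨u, hu⟩ := hsf.map (MonoidHom.mulSingle D i)
  rw [← MonoidHom.mulSingle_apply, ← hu, Ideal.span_singleton_mul_right_unit u.isUnit,
    map_multiset_prod, ← Ideal.multiset_prod_span_singleton, Multiset.map_map]
  refine Submonoid.multiset_prod_mem _ _ fun P hP => ?_
  obtain ⟨q, hq, rfl⟩ := Multiset.mem_map.mp hP
  have : (Ideal.span {q}).IsPrime := (Ideal.span_singleton_prime (hs q hq).ne_zero).mpr (hs q hq)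
  rw [Function.comp_apply, MonoidHom.mulSingle_apply, Ideal.span_singleton_mulSingle]
  exact Submonoid.subset_closure (Ideal.comap_isPrime _ _)

end PrimeProducts

theorem isGeneralZPIRing_polynomial_of_ringEquiv_pi {R : Type*} [CommRing R] {ι : Type*}
    [Finite ι] {F : ι → Type*} [∀ i, Field (F i)] (e : R ≃+* Π i, F i) :
    IsGeneralZPIRing R[X] := by
  set e' : R[X] ≃+* Π i, (F i)[X] := (mapEquiv e).trans (piEquiv F)
  refine isGeneralZPIRing_of_forall_mem_closure fun I => ?_
  rw [← Ideal.map_comap_of_surjective _ e'.symm.surjective I, Ideal.comap_symm]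
  exact Ideal.map_mem_closure_isPrime e'.symm (mem_closure_isPrime_pi _)

theorem stmt14 {R : Type u} [CommRing R] [Nontrivial R] (n : ℕ) (hn : 0 < n) :
    IsNOAFRing (Polynomial R) n ↔
      ∃ (m : ℕ) (F : Fin m → Type u) (_ : ∀ i, Field (F i)),
        Nonempty (R ≃+* ((i : Fin m) → F i)) := by
  refine ⟨fun h => ?_, fun ⟨_, _, _, ⟨e⟩⟩ => ?_⟩
  · exact (h.isGeneralZPIRing hn not_isUnit_X not_isUnit_one_sub_X
      (add_sub_cancel X 1)).exists_ringEquiv_pi_field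
  · exact (isGeneralZPIRing_polynomial_of_ringEquiv_pi e).isNOAFRing n
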